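/- The link product of positive semidefinite operators is positive semidefinite: if A is a positive semidefinite matrix on ℂᵃ ⊗ ℂᵈ and B is a positive semidefinite matrix on ℂᵈ ⊗ ℂᵇ, then the link product A * B = Tr_d[(Aᶿᵈ ⊗ I_b)(I_a ⊗ B)] is a positive semidefinite matrix on ℂᵃ ⊗ ℂᵇ. -/

import Mathlib

open Matrix Kronecker ComplexOrder

/-- The partial trace over the middle factor of a matrix on `ℂˣ ⊗ ℂᴶ ⊗ ℂʸ`:
`(Tr_J M)_{(x,y),(x',y')} = Σ_k M_{(x,(k,y)),(x',(k,y'))}`. -/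
noncomputable def ptraceMid {x J y : Type*} [Fintype J]
    (M : Matrix (x × J × y) (x × J × y) ℂ) : Matrix (x × y) (x × y) ℂ :=
  fun p q => ∑ k : J, M (p.1, (k, p.2)) (q.1, (k, q.2))

/-- Partial transposition on the second tensor factor:
`(Mᶿᴶ)_{(a,j),(b,j')} = M_{(a,j'),(b,j)}`. -/
def ptransposeSnd {x J : Type*} (M : Matrix (x × J) (x × J) ℂ) :
    Matrix (x × J) (x × J) ℂ :=
  fun p q => M (p.1, q.2) (q.1, p.2)

/-- Partial transposition on the first tensor factor:
`(Mᶿᴶ)_{(j,a),(j',b)} = M_{(j',a),(j,b)}`. -/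
def ptransposeFst {J y : Type*} (M : Matrix (J × y) (J × y) ℂ) :
    Matrix (J × y) (J × y) ℂ :=
  fun p q => M (q.1, p.2) (p.1, q.2)

/-- The link product of `A` on `ℂˣ ⊗ ℂᴶ` and `B` on `ℂᴶ ⊗ ℂʸ` over the common factor `ℂᴶ`:
`A * B := Tr_J[(Aᶿᴶ ⊗ I_y)(I_x ⊗ B)]`, a matrix on `ℂˣ ⊗ ℂʸ` (identity factors inserted in
the tensor fashion, tensor factors matched via the canonical associativity reordering). -/
noncomputable def linkProduct {x J y : Type*} [Fintype x] [Fintype J] [Fintype y]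
    [DecidableEq x] [DecidableEq y]
    (A : Matrix (x × J) (x × J) ℂ) (B : Matrix (J × y) (J × y) ℂ) :
    Matrix (x × y) (x × y) ℂ :=
  ptraceMid
    ((Matrix.reindex (Equiv.prodAssoc x J y) (Equiv.prodAssoc x J y)
        (ptransposeSnd A ⊗ₖ (1 : Matrix y y ℂ))) *
      ((1 : Matrix x x ℂ) ⊗ₖ B))

/-!
Entrywise, `(A * B)_{(x,y),(x',y')} = Σ_{i,j} A_{(x,i),(x',j)} B_{(i,y),(j,y')}`: the partial
transpose turns the link product into the compression `Wᴴ (A ⊗ B) W` of the positive semidefinite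
matrix `A ⊗ B` by `W = I_x ⊗ |Φ⟩ ⊗ I_y`, where `|Φ⟩ = Σⱼ |j⟩|j⟩` is the unnormalised maximally
entangled vector on `ℂᴶ ⊗ ℂᴶ`. Compressions of positive semidefinite matrices are positive
semidefinite.
-/

lemma linkProduct_apply {x J y : Type*} [Fintype x] [Fintype J] [Fintype y]
    [DecidableEq x] [DecidableEq y]
    (A : Matrix (x × J) (x × J) ℂ) (B : Matrix (J × y) (J × y) ℂ) (p q : x × y) :
    linkProduct A B p q = ∑ i : J, ∑ j : J, A (p.1, i) (q.1, j) * B (i, p.2) (j, q.2) := by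
  rw [Finset.sum_comm]
  simp [linkProduct, ptraceMid, ptransposeSnd, mul_apply, Fintype.sum_prod_type,
    one_apply, Equiv.prodAssoc]

def linkContraction (x J y : Type*) [DecidableEq x] [DecidableEq J] [DecidableEq y] :
    Matrix ((x × J) × (J × y)) (x × y) ℂ :=
  fun m p => if m.1.1 = p.1 ∧ m.1.2 = m.2.1 ∧ m.2.2 = p.2 then 1 else 0

lemma conjTranspose_linkContraction_mul_mul_apply {x J y : Type*} [Fintype x] [Fintype J]
    [Fintype y] [DecidableEq x] [DecidableEq J] [DecidableEq y]
    (K : Matrix ((x × J) × (J × y)) ((x × J) × (J × y)) ℂ) (p q : x × y) :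
    ((linkContraction x J y)ᴴ * K * linkContraction x J y) p q =
      ∑ i : J, ∑ j : J, K ((p.1, i), (i, p.2)) ((q.1, j), (j, q.2)) := by
  rw [Finset.sum_comm]
  simp [linkContraction, mul_apply, Fintype.sum_prod_type, ite_and,
    apply_ite (starRingEnd ℂ), ite_mul]

theorem linkProduct_eq_conjTranspose_mul_kronecker_mul {x J y : Type*} [Fintype x] [Fintype J]
    [Fintype y] [DecidableEq x] [DecidableEq J] [DecidableEq y]
    (A : Matrix (x × J) (x × J) ℂ) (B : Matrix (J × y) (J × y) ℂ) :
    linkProduct A B = (linkContraction x J y)ᴴ * (A ⊗ₖ B) * linkContraction x J y := by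
  ext p q
  simp only [linkProduct_apply, conjTranspose_linkContraction_mul_mul_apply, kronecker_apply]

/-- The link product of positive semidefinite operators is positive
semidefinite: if `A` is positive semidefinite on `ℂᵃ ⊗ ℂᵈ` and `B` is positive semidefinite
on `ℂᵈ ⊗ ℂᵇ`, then the link product `A * B = Tr_d[(Aᶿᵈ ⊗ I_b)(I_a ⊗ B)]` is positive
semidefinite on `ℂᵃ ⊗ ℂᵇ`. -/
theorem linkProduct_posSemidef {a d b : Type*} [Fintype a] [Fintype d] [Fintype b]
    [DecidableEq a] [DecidableEq d] [DecidableEq b]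
    (A : Matrix (a × d) (a × d) ℂ) (B : Matrix (d × b) (d × b) ℂ)
    (hA : A.PosSemidef) (hB : B.PosSemidef) :
    (linkProduct A B).PosSemidef := by
  rw [linkProduct_eq_conjTranspose_mul_kronecker_mul]
  exact (hA.kronecker hB).conjTranspose_mul_mul_same _
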